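/- Suppose the QVE Mx = a + b(x,x) has a minimal nonnegative solution x* with x* > 0. Then ρ(M⁻¹(b(x*,·) + b(·,x*))) ≤ 1, where M⁻¹(b(x*,·) + b(·,x*)) denotes the matrix of the linear map w ↦ M⁻¹(b(x*, w) + b(w, x*)); consequently F'_{x*} is an M-matrix. -/

import Mathlib

open Matrix Filter Topology

/-- The spectral radius of a real square matrix: the supremum of the norms of
its complex eigenvalues. -/
noncomputable def specRad {n : ℕ} (A : Matrix (Fin n) (Fin n) ℝ) : ℝ :=
  sSup {r : ℝ | ∃ μ ∈ spectrum ℂ (A.map (Complex.ofReal)), ‖μ‖ = r}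

/-- An M-matrix: a matrix of the form `s • 1 - P` with `P ≥ 0` and `ρ(P) ≤ s`. -/
def IsMMat {n : ℕ} (A : Matrix (Fin n) (Fin n) ℝ) : Prop :=
  ∃ (s : ℝ) (P : Matrix (Fin n) (Fin n) ℝ),
    (∀ i j, 0 ≤ P i j) ∧ specRad P ≤ s ∧ A = s • (1 : Matrix (Fin n) (Fin n) ℝ) - P

/-- A nonsingular M-matrix: an M-matrix that is invertible. -/
def IsNsMMat {n : ℕ} (A : Matrix (Fin n) (Fin n) ℝ) : Prop :=
  IsMMat A ∧ IsUnit A.det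

/-!
`M⁻¹ ≥ 0` follows from the sign pattern of `M` alone: `M + ε` sends the positive vector `x*`
to a positive vector, which makes it inverse-positive, and `ε → 0`. Both claims then reduce to
the Collatz–Wielandt bound: if `Q ≥ 0` and `Q w ≤ t w` for some `w > 0`, every eigenvalue of `Q`
has modulus at most `t`. The vector `w` is the gap `x* - z'`, where `z'` comes from the
fixed-point iteration for the damped data `θ a`, `θ < 1`. Damping keeps `w ≥ (1 - θ) x* > 0`;
minimality of `x*` makes the undamped iteration converge to `x*`, so for `θ` close to `1` the
gap is small, `b(w, w)` is negligible against `b(x*, w) + b(w, x*)`, and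
`b(x*, w) + b(w, x*) ≤ t M w` for any prescribed `t > 1`.
-/

namespace Matrix

section Fintype

variable {ι : Type*} [Fintype ι]

theorem mulVec_le_mulVec_of_nonneg {A : Matrix ι ι ℝ} (hA : ∀ i j, 0 ≤ A i j) {x y : ι → ℝ}
    (hxy : x ≤ y) : A *ᵥ x ≤ A *ᵥ y := fun i =>
  Finset.sum_le_sum fun j _ => mul_le_mul_of_nonneg_left (hxy j) (hA i j)

theorem mul_apply_nonneg {A B : Matrix ι ι ℝ} (hA : ∀ i j, 0 ≤ A i j) (hB : ∀ i j, 0 ≤ B i j)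
    (i j : ι) : 0 ≤ (A * B) i j :=
  Finset.sum_nonneg fun k _ => mul_nonneg (hA i k) (hB k j)

theorem nonneg_of_offDiag_nonpos_of_mulVec_nonneg {A : Matrix ι ι ℝ}
    (hA : ∀ i j, i ≠ j → A i j ≤ 0) {w : ι → ℝ} (hw : ∀ i, 0 < w i)
    (hAw : ∀ i, 0 < (A *ᵥ w) i) {x : ι → ℝ} (hAx : 0 ≤ A *ᵥ x) : 0 ≤ x := by
  by_contra hx
  obtain ⟨j, hj⟩ : ∃ j, x j < 0 := by simpa [Pi.le_def] using hx
  obtain ⟨i, -, hi⟩ :=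
    Finset.exists_max_image Finset.univ (fun i => -x i / w i) ⟨j, Finset.mem_univ j⟩
  set t := -x i / w i
  have ht : 0 < t := (div_pos (neg_pos.2 hj) (hw j)).trans_le (hi j (Finset.mem_univ j))
  have hy : ∀ k, 0 ≤ x k + t * w k := fun k => by
    have := hi k (Finset.mem_univ k)
    rw [div_le_iff₀ (hw k)] at this
    linarith
  have hyi : x i + t * w i = 0 := by
    simp only [t, div_mul_cancel₀ _ (hw i).ne']
    ring
  -- at the entry where `x + t • w` touches zero only off-diagonal, nonpositive terms remain
  have hle : (A *ᵥ (x + t • w)) i ≤ 0 := by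
    refine Finset.sum_nonpos fun k _ => ?_
    obtain rfl | hik := eq_or_ne i k
    · simp [hyi]
    · simpa using mul_nonpos_of_nonpos_of_nonneg (hA i k hik) (hy k)
  have hpos : 0 < (A *ᵥ (x + t • w)) i := by
    rw [mulVec_add, mulVec_smul]
    simpa using add_pos_of_nonneg_of_pos (hAx i) (mul_pos ht (hAw i))
  linarith

end Fintype

variable {ι : Type*} [Fintype ι] [DecidableEq ι]

theorem mulVec_inv_mulVec {A : Matrix ι ι ℝ} (hdet : IsUnit A.det) (v : ι → ℝ) :
    A *ᵥ (A⁻¹ *ᵥ v) = v := by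
  rw [mulVec_mulVec, mul_nonsing_inv A hdet, one_mulVec]

theorem inv_mulVec_mulVec {A : Matrix ι ι ℝ} (hdet : IsUnit A.det) (v : ι → ℝ) :
    A⁻¹ *ᵥ (A *ᵥ v) = v := by
  rw [mulVec_mulVec, nonsing_inv_mul A hdet, one_mulVec]

theorem isUnit_det_of_offDiag_nonpos_of_mulVec_pos {A : Matrix ι ι ℝ}
    (hA : ∀ i j, i ≠ j → A i j ≤ 0) {w : ι → ℝ} (hw : ∀ i, 0 < w i)
    (hAw : ∀ i, 0 < (A *ᵥ w) i) : IsUnit A.det := by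
  rw [isUnit_iff_ne_zero, Ne, ← exists_mulVec_eq_zero_iff]
  rintro ⟨v, hv, hAv⟩
  refine hv (le_antisymm ?_ (nonneg_of_offDiag_nonpos_of_mulVec_nonneg hA hw hAw hAv.ge))
  simpa using nonneg_of_offDiag_nonpos_of_mulVec_nonneg hA hw hAw (x := -v)
    (by rw [mulVec_neg, hAv, neg_zero])

theorem inv_nonneg_of_offDiag_nonpos_of_mulVec_pos {A : Matrix ι ι ℝ}
    (hA : ∀ i j, i ≠ j → A i j ≤ 0) {w : ι → ℝ} (hw : ∀ i, 0 < w i)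
    (hAw : ∀ i, 0 < (A *ᵥ w) i) (i j : ι) : 0 ≤ A⁻¹ i j := by
  have hdet := isUnit_det_of_offDiag_nonpos_of_mulVec_pos hA hw hAw
  have hcol : 0 ≤ A⁻¹ *ᵥ Pi.single j 1 := by
    refine nonneg_of_offDiag_nonpos_of_mulVec_nonneg hA hw hAw ?_
    rw [mulVec_inv_mulVec hdet]
    exact Pi.single_nonneg.2 zero_le_one
  simpa [mulVec_single_one] using hcol i

theorem inv_nonneg_of_offDiag_nonpos_of_mulVec_nonneg {A : Matrix ι ι ℝ}
    (hA : ∀ i j, i ≠ j → A i j ≤ 0) (hdet : IsUnit A.det) {w : ι → ℝ} (hw : ∀ i, 0 < w i)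
    (hAw : 0 ≤ A *ᵥ w) (i j : ι) : 0 ≤ A⁻¹ i j := by
  have hshift : ∀ ε : ℝ, 0 < ε → 0 ≤ (A + ε • 1)⁻¹ i j := fun ε hε =>
    inv_nonneg_of_offDiag_nonpos_of_mulVec_pos
      (fun i j hij => by simpa [one_apply_ne hij] using hA i j hij) hw
      (fun i => by
        simpa [add_mulVec, smul_mulVec] using add_pos_of_nonneg_of_pos (hAw i) (mul_pos hε (hw i)))
      i j
  have hcont : ContinuousAt (fun ε : ℝ => (A + ε • (1 : Matrix ι ι ℝ))⁻¹) 0 := by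
    refine ContinuousAt.comp (f := fun ε : ℝ => A + ε • (1 : Matrix ι ι ℝ)) ?_ (by fun_prop)
    simpa using continuousAt_matrix_inv A (NormedRing.inverse_continuousAt hdet.unit)
  have hlim := hcont.tendsto.mono_left (nhdsWithin_le_nhds (s := Set.Ioi 0))
  simp only [zero_smul, add_zero] at hlim
  exact ge_of_tendsto ((hlim.apply_nhds i).apply_nhds j) (eventually_nhdsWithin_of_forall hshift)

theorem norm_le_of_mulVec_le_smul {Q : Matrix ι ι ℝ} (hQ : ∀ i j, 0 ≤ Q i j) {w : ι → ℝ}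
    (hw : ∀ i, 0 < w i) {t : ℝ} (hQw : Q *ᵥ w ≤ t • w) {μ : ℂ}
    (hμ : μ ∈ spectrum ℂ (Q.map Complex.ofReal)) : ‖μ‖ ≤ t := by
  obtain ⟨v, hv, hv0⟩ : ∃ v, Q.map Complex.ofReal *ᵥ v = μ • v ∧ v ≠ 0 := by
    rw [← spectrum_toLin', ← Module.End.hasEigenvalue_iff_mem_spectrum] at hμ
    simpa [Module.End.hasEigenvector_iff] using hμ.exists_hasEigenvector
  obtain ⟨j, hj⟩ : ∃ j, v j ≠ 0 := Function.ne_iff.1 hv0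
  obtain ⟨i, -, hi⟩ :=
    Finset.exists_max_image Finset.univ (fun i => ‖v i‖ / w i) ⟨j, Finset.mem_univ j⟩
  set c := ‖v i‖ / w i
  have hc : 0 < c :=
    (div_pos (norm_pos_iff.2 hj) (hw j)).trans_le (hi j (Finset.mem_univ j))
  have hvc : ∀ k, ‖v k‖ ≤ c * w k := fun k => by
    simpa [div_le_iff₀ (hw k)] using hi k (Finset.mem_univ k)
  have key : ‖μ‖ * (c * w i) ≤ t * (c * w i) := calc
    ‖μ‖ * (c * w i) = ‖(Q.map Complex.ofReal *ᵥ v) i‖ := by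
      simp [hv, c, div_mul_cancel₀ _ (hw i).ne']
    _ ≤ ∑ k, Q i k * ‖v k‖ := by
      refine (norm_sum_le _ _).trans_eq (Finset.sum_congr rfl fun k _ => ?_)
      simp [abs_of_nonneg (hQ i k)]
    _ ≤ ∑ k, Q i k * (c * w k) :=
      Finset.sum_le_sum fun k _ => mul_le_mul_of_nonneg_left (hvc k) (hQ i k)
    _ = c * (Q *ᵥ w) i := by
      simp only [mulVec, dotProduct, Finset.mul_sum]
      exact Finset.sum_congr rfl fun k _ => by ring
    _ ≤ c * (t * w i) := mul_le_mul_of_nonneg_left (by simpa using hQw i) hc.le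
    _ = t * (c * w i) := by ring
  exact le_of_mul_le_mul_right key (mul_pos hc (hw i))

theorem inv_mul_mulVec_le_smul {A B : Matrix ι ι ℝ} (hAinv : ∀ i j, 0 ≤ A⁻¹ i j)
    (hdet : IsUnit A.det) {w : ι → ℝ} {t : ℝ} (h : B *ᵥ w ≤ t • (A *ᵥ w)) :
    (A⁻¹ * B) *ᵥ w ≤ t • w := by
  simpa [← mulVec_mulVec, mulVec_smul, inv_mulVec_mulVec hdet] using
    mulVec_le_mulVec_of_nonneg hAinv h

theorem add_mulVec_le_mul_smul {P B : Matrix ι ι ℝ} (hP : ∀ i j, 0 ≤ P i j) {w : ι → ℝ}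
    (hw : 0 ≤ w) {s t : ℝ} (ht : 1 ≤ t) (h : B *ᵥ w ≤ t • ((s • 1 - P) *ᵥ w)) :
    (P + B) *ᵥ w ≤ (s * t) • w := by
  intro i
  have hi := h i
  have hPw : 0 ≤ (P *ᵥ w) i := by simpa using mulVec_le_mulVec_of_nonneg hP hw i
  simp only [add_mulVec, sub_mulVec, smul_mulVec, one_mulVec, Pi.add_apply, Pi.sub_apply,
    Pi.smul_apply, smul_eq_mul] at hi ⊢
  nlinarith

end Matrix

theorem specRad_nonneg {n : ℕ} (A : Matrix (Fin n) (Fin n) ℝ) : 0 ≤ specRad A :=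
  Real.sSup_nonneg fun _ ⟨μ, _, hμ⟩ => hμ ▸ norm_nonneg μ

theorem specRad_le_of_mulVec_le_smul {n : ℕ} {Q : Matrix (Fin n) (Fin n) ℝ}
    (hQ : ∀ i j, 0 ≤ Q i j) {w : Fin n → ℝ} (hw : ∀ i, 0 < w i) {t : ℝ} (ht : 0 ≤ t)
    (hQw : Q *ᵥ w ≤ t • w) : specRad Q ≤ t :=
  Real.sSup_le (fun _ ⟨_, hμ, hr⟩ => hr ▸ norm_le_of_mulVec_le_smul hQ hw hQw hμ) ht

namespace LinearMap

variable {ι : Type*} {b : (ι → ℝ) →ₗ[ℝ] (ι → ℝ) →ₗ[ℝ] (ι → ℝ)}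

theorem apply_le_apply_of_nonneg (hb : ∀ x y : ι → ℝ, 0 ≤ x → 0 ≤ y → 0 ≤ b x y)
    {x x' y y' : ι → ℝ} (hx : 0 ≤ x) (hy : 0 ≤ y) (hxx' : x ≤ x') (hyy' : y ≤ y') :
    b x y ≤ b x' y' := by
  have h : b (x' - x) y' + b x (y' - y) = b x' y' - b x y := by
    simp only [map_sub, sub_apply]
    abel
  exact sub_nonneg.1 (h ▸ add_nonneg (hb _ _ (sub_nonneg.2 hxx') (hy.trans hyy'))
    (hb _ _ hx (sub_nonneg.2 hyy')))

theorem smul_apply_add_apply_le_sub (hb : ∀ x y : ι → ℝ, 0 ≤ x → 0 ≤ y → 0 ≤ b x y)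
    {x d : ι → ℝ} {c : ℝ} (hc : c ≤ 1) (hx : 0 ≤ x) (hd : 0 ≤ d) (hdx : d ≤ (1 - c) • x) :
    c • (b x d + b d x) ≤ b x x - b (x - d) (x - d) := by
  have hexp : b x x - b (x - d) (x - d) = b x d + b d x - b d d := by
    simp only [map_sub, sub_apply]
    abel
  have hdd : b d d ≤ (1 - c) • b d x := by
    simpa using apply_le_apply_of_nonneg hb hd hd le_rfl hdx
  rw [hexp]
  intro i
  have hxd := mul_nonneg (sub_nonneg.2 hc) (hb x d hx hd i)
  have hddi := hdd i
  simp only [Pi.smul_apply, Pi.add_apply, Pi.sub_apply, smul_eq_mul] at hddi ⊢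
  nlinarith

theorem continuous_diag [Fintype ι] (b : (ι → ℝ) →ₗ[ℝ] (ι → ℝ) →ₗ[ℝ] (ι → ℝ)) :
    Continuous fun v => b v v :=
  b.toContinuousBilinearMap.continuous₂.comp (continuous_id.prodMk continuous_id)

end LinearMap

section QVE

variable {ι : Type*} [Fintype ι] {M : Matrix ι ι ℝ} {a : ι → ℝ}
  {b : (ι → ℝ) →ₗ[ℝ] (ι → ℝ) →ₗ[ℝ] (ι → ℝ)}

/-- `z'` is one step of the iteration for the data `θ • a`, taken from a point `z ≥ c • x`. -/
theorem smul_apply_add_apply_le_mulVec_sub (hb : ∀ x y : ι → ℝ, 0 ≤ x → 0 ≤ y → 0 ≤ b x y)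
    (ha : 0 ≤ a) {x z z' : ι → ℝ} (hx0 : 0 ≤ x) (hx : M *ᵥ x = a + b x x) {θ c : ℝ}
    (hθ : θ ≤ 1) (hc0 : 0 ≤ c) (hc1 : c ≤ 1) (hxz : c • x ≤ z) (hzz' : z ≤ z') (hz'x : z' ≤ x)
    (hz' : M *ᵥ z' = θ • a + b z z) :
    c • (b x (x - z') + b (x - z') x) ≤ M *ᵥ (x - z') := by
  have hgap := b.smul_apply_add_apply_le_sub hb hc1 hx0 (sub_nonneg.2 (hzz'.trans hz'x))
    (fun i => by
      have := hxz i
      simp only [Pi.sub_apply, Pi.smul_apply, smul_eq_mul] at this ⊢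
      linarith)
  rw [sub_sub_cancel] at hgap
  have hw0 : 0 ≤ x - z' := sub_nonneg.2 hz'x
  have hwd : x - z' ≤ x - z := sub_le_sub_left hzz' x
  have hw : c • (b x (x - z') + b (x - z') x) ≤ c • (b x (x - z) + b (x - z) x) :=
    smul_le_smul_of_nonneg_left (add_le_add (b.apply_le_apply_of_nonneg hb hx0 hw0 le_rfl hwd)
      (b.apply_le_apply_of_nonneg hb hw0 hx0 hwd le_rfl)) hc0
  have hMw : b x x - b z z ≤ M *ᵥ (x - z') := by
    rw [mulVec_sub, hx, hz']
    intro i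
    have := mul_nonneg (sub_nonneg.2 hθ) (ha i)
    simp only [Pi.sub_apply, Pi.add_apply, Pi.smul_apply, smul_eq_mul]
    nlinarith
  exact hw.trans (hgap.trans hMw)

variable [DecidableEq ι]

variable (M a b) in
noncomputable def qveIter (k : ℕ) : ι → ℝ :=
  (fun x => M⁻¹ *ᵥ (a + b x x))^[k] 0

variable (M a b) in
def IsMinimalSolution (x : ι → ℝ) : Prop :=
  0 ≤ x ∧ M *ᵥ x = a + b x x ∧ ∀ y, 0 ≤ y → M *ᵥ y = a + b y y → x ≤ y

theorem qveIter_succ (k : ℕ) :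
    qveIter M a b (k + 1) = M⁻¹ *ᵥ (a + b (qveIter M a b k) (qveIter M a b k)) :=
  Function.iterate_succ_apply' _ _ _

theorem continuous_qveIter (k : ℕ) : Continuous fun a => qveIter M a b k := by
  induction k with
  | zero => exact continuous_const
  | succ k ih =>
    simp_rw [qveIter_succ]
    exact continuous_const.matrix_mulVec (continuous_id.add (b.continuous_diag.comp ih))

theorem qveIter_nonneg (hMinv : ∀ i j, 0 ≤ M⁻¹ i j) (ha : 0 ≤ a)
    (hb : ∀ x y : ι → ℝ, 0 ≤ x → 0 ≤ y → 0 ≤ b x y) (k : ℕ) : 0 ≤ qveIter M a b k := by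
  induction k with
  | zero => exact le_rfl
  | succ k ih =>
    rw [qveIter_succ]
    simpa using mulVec_le_mulVec_of_nonneg hMinv (add_nonneg ha (hb _ _ ih ih))

theorem qveIter_le (hMinv : ∀ i j, 0 ≤ M⁻¹ i j) (ha : 0 ≤ a)
    (hb : ∀ x y : ι → ℝ, 0 ≤ x → 0 ≤ y → 0 ≤ b x y) {y : ι → ℝ} (hy : 0 ≤ y)
    (hsuper : M⁻¹ *ᵥ (a + b y y) ≤ y) (k : ℕ) : qveIter M a b k ≤ y := by
  induction k with
  | zero => exact hy
  | succ k ih =>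
    have hk := qveIter_nonneg hMinv ha hb k
    rw [qveIter_succ]
    exact (mulVec_le_mulVec_of_nonneg hMinv
      (add_le_add_right (b.apply_le_apply_of_nonneg hb hk hk ih ih) a)).trans hsuper

theorem monotone_qveIter (hMinv : ∀ i j, 0 ≤ M⁻¹ i j) (ha : 0 ≤ a)
    (hb : ∀ x y : ι → ℝ, 0 ≤ x → 0 ≤ y → 0 ≤ b x y) : Monotone (qveIter M a b) := by
  refine monotone_nat_of_le_succ fun k => ?_
  induction k with
  | zero => exact qveIter_nonneg hMinv ha hb 1
  | succ k ih =>
    have hk := qveIter_nonneg hMinv ha hb k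
    rw [qveIter_succ, qveIter_succ (k + 1)]
    exact mulVec_le_mulVec_of_nonneg hMinv
      (add_le_add_right (b.apply_le_apply_of_nonneg hb hk hk ih ih) a)

theorem inv_mulVec_smul_add_apply_smul_le (hMinv : ∀ i j, 0 ≤ M⁻¹ i j) (hdet : IsUnit M.det)
    (hb : ∀ x y : ι → ℝ, 0 ≤ x → 0 ≤ y → 0 ≤ b x y) {x : ι → ℝ} (hx0 : 0 ≤ x)
    (hx : M *ᵥ x = a + b x x) {θ : ℝ} (hθ0 : 0 ≤ θ) (hθ1 : θ ≤ 1) :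
    M⁻¹ *ᵥ (θ • a + b (θ • x) (θ • x)) ≤ θ • x := by
  have h : θ • a + b (θ • x) (θ • x) ≤ θ • (M *ᵥ x) := by
    intro i
    have hi := mul_nonneg (mul_nonneg hθ0 (sub_nonneg.2 hθ1)) (hb x x hx0 hx0 i)
    simp only [hx, map_smul, LinearMap.smul_apply, Pi.add_apply, Pi.smul_apply, smul_eq_mul]
    nlinarith
  simpa [mulVec_smul, inv_mulVec_mulVec hdet] using mulVec_le_mulVec_of_nonneg hMinv h

namespace IsMinimalSolution

variable {x : ι → ℝ}

theorem tendsto_qveIter (hx : IsMinimalSolution M a b x) (hMinv : ∀ i j, 0 ≤ M⁻¹ i j)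
    (hdet : IsUnit M.det) (ha : 0 ≤ a) (hb : ∀ x y : ι → ℝ, 0 ≤ x → 0 ≤ y → 0 ≤ b x y) :
    Tendsto (qveIter M a b) atTop (𝓝 x) := by
  obtain ⟨hx0, hxsol, hxmin⟩ := hx
  have hle := qveIter_le hMinv ha hb hx0 (by rw [← hxsol, inv_mulVec_mulVec hdet])
  have hlim :=
    tendsto_atTop_ciSup (monotone_qveIter hMinv ha hb) ⟨x, Set.forall_mem_range.2 hle⟩
  set y := ⨆ k, qveIter M a b k
  have hfix : M⁻¹ *ᵥ (a + b y y) = y := by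
    refine tendsto_nhds_unique ?_ (hlim.comp (tendsto_add_atTop_nat 1))
    simp_rw [Function.comp_def, qveIter_succ]
    exact ((continuous_const.matrix_mulVec
      (continuous_const.add b.continuous_diag)).tendsto y).comp hlim
  have hyx : y ≤ x := le_of_tendsto' hlim hle
  have hy0 : 0 ≤ y := ge_of_tendsto' hlim (qveIter_nonneg hMinv ha hb)
  have hysol : M *ᵥ y = a + b y y := by rw [← hfix, mulVec_inv_mulVec hdet, hfix]
  rwa [le_antisymm hyx (hxmin y hy0 hysol)] at hlim

theorem exists_lt_qveIter_smul (hx : IsMinimalSolution M a b x) (hxpos : ∀ i, 0 < x i)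
    (hMinv : ∀ i j, 0 ≤ M⁻¹ i j) (hdet : IsUnit M.det) (ha : 0 ≤ a)
    (hb : ∀ x y : ι → ℝ, 0 ≤ x → 0 ≤ y → 0 ≤ b x y) {c : ℝ} (hc : c < 1) :
    ∃ θ : ℝ, 0 ≤ θ ∧ θ < 1 ∧ ∃ K, ∀ i, c * x i < qveIter M (θ • a) b K i := by
  obtain ⟨K, hK⟩ := (eventually_all.2 fun i =>
    (tendsto_pi_nhds.1 (hx.tendsto_qveIter hMinv hdet ha hb) i).eventually
      (eventually_gt_nhds (mul_lt_of_lt_one_left (hxpos i) hc))).exists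
  have hcont : Tendsto (fun θ : ℝ => qveIter M (θ • a) b K) (𝓝[<] 1) (𝓝 (qveIter M a b K)) := by
    have h : Continuous fun θ : ℝ => qveIter M (θ • a) b K :=
      (continuous_qveIter K).comp (continuous_id.smul continuous_const)
    simpa using (h.tendsto 1).mono_left nhdsWithin_le_nhds
  have hev : ∀ᶠ θ in 𝓝[<] (1 : ℝ), ∀ i, c * x i < qveIter M (θ • a) b K i :=
    eventually_all.2 fun i => (tendsto_pi_nhds.1 hcont i).eventually (eventually_gt_nhds (hK i))
  obtain ⟨θ, hθ, hθ0, hθ1⟩ := (hev.and (((eventually_gt_nhds (zero_lt_one' ℝ)).filter_mono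
    nhdsWithin_le_nhds).and self_mem_nhdsWithin)).exists
  exact ⟨θ, hθ0.le, hθ1, K, hθ⟩

theorem exists_pos_apply_add_apply_le_smul_mulVec (hx : IsMinimalSolution M a b x)
    (hxpos : ∀ i, 0 < x i) (hMinv : ∀ i j, 0 ≤ M⁻¹ i j) (hdet : IsUnit M.det) (ha : 0 ≤ a)
    (hb : ∀ x y : ι → ℝ, 0 ≤ x → 0 ≤ y → 0 ≤ b x y) {t : ℝ} (ht : 1 < t) :
    ∃ w : ι → ℝ, (∀ i, 0 < w i) ∧ b x w + b w x ≤ t • (M *ᵥ w) := by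
  obtain ⟨θ, hθ0, hθ1, K, hK⟩ :=
    hx.exists_lt_qveIter_smul hxpos hMinv hdet ha hb (inv_lt_one_of_one_lt₀ ht)
  have hθa : 0 ≤ θ • a := smul_nonneg hθ0 ha
  set z' := qveIter M (θ • a) b (K + 1)
  have hz'θ : z' ≤ θ • x := qveIter_le hMinv hθa hb (smul_nonneg hθ0 hx.1)
    (inv_mulVec_smul_add_apply_smul_le hMinv hdet hb hx.1 hx.2.1 hθ0 hθ1.le) _
  have hstep := smul_apply_add_apply_le_mulVec_sub hb ha hx.1 hx.2.1 hθ1.le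
    (inv_nonneg.2 (zero_le_one.trans ht.le)) (inv_le_one_of_one_le₀ ht.le)
    (fun i => (hK i).le) (monotone_qveIter hMinv hθa hb K.le_succ)
    (hz'θ.trans (smul_le_of_le_one_left hx.1 hθ1.le))
    (by rw [qveIter_succ, mulVec_inv_mulVec hdet])
  refine ⟨x - z', fun i => ?_, ?_⟩
  · have := hz'θ i
    simp only [Pi.smul_apply, smul_eq_mul] at this
    simp only [Pi.sub_apply]
    nlinarith [hxpos i]
  · have := smul_le_smul_of_nonneg_left hstep (zero_le_one.trans ht.le)
    rwa [smul_smul, mul_inv_cancel₀ (zero_lt_one.trans ht).ne', one_smul] at this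

end IsMinimalSolution

end QVE

/-- If the QVE `M x = a + b(x,x)` has a minimal nonnegative solution `x* > 0`, then
`ρ(M⁻¹(b(x*,·) + b(·,x*))) ≤ 1`, and consequently the derivative
`F'_{x*} = M - b(x*,·) - b(·,x*)` is an M-matrix. -/
theorem qve_derivative_at_minimal_is_MMat {n : ℕ} (M : Matrix (Fin n) (Fin n) ℝ)
    (hM : IsNsMMat M) (a : Fin n → ℝ) (ha : 0 ≤ a)
    (b : (Fin n → ℝ) →ₗ[ℝ] (Fin n → ℝ) →ₗ[ℝ] (Fin n → ℝ))
    (hb : ∀ x y : Fin n → ℝ, 0 ≤ x → 0 ≤ y → 0 ≤ b x y)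
    (xs : Fin n → ℝ) (hxs_nonneg : 0 ≤ xs) (hxs_sol : M *ᵥ xs = a + b xs xs)
    (hxs_min : ∀ s : Fin n → ℝ, 0 ≤ s → M *ᵥ s = a + b s s → xs ≤ s)
    (hxs_pos : ∀ i, 0 < xs i) :
    specRad (M⁻¹ * (LinearMap.toMatrix' (b xs) + LinearMap.toMatrix' (b.flip xs))) ≤ 1 ∧
    IsMMat (M - LinearMap.toMatrix' (b xs) - LinearMap.toMatrix' (b.flip xs)) := by
  obtain ⟨⟨s, P, hP, hsP, hMeq⟩, hdet⟩ := hM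
  have hMinv : ∀ i j, 0 ≤ M⁻¹ i j :=
    inv_nonneg_of_offDiag_nonpos_of_mulVec_nonneg
      (fun i j hij => by simp [hMeq, one_apply_ne hij, hP i j]) hdet hxs_pos
      (hxs_sol ▸ add_nonneg ha (hb xs xs hxs_nonneg hxs_nonneg))
  set B := LinearMap.toMatrix' (b xs) + LinearMap.toMatrix' (b.flip xs)
  have hB : ∀ i j, 0 ≤ B i j := fun i j => by
    have hj : 0 ≤ (Pi.single j 1 : Fin n → ℝ) := Pi.single_nonneg.2 zero_le_one
    simpa [B] using add_nonneg (hb _ _ hxs_nonneg hj i) (hb _ _ hj hxs_nonneg i)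
  have hsub : ∀ t : ℝ, 1 < t → ∃ w : Fin n → ℝ, (∀ i, 0 < w i) ∧ B *ᵥ w ≤ t • (M *ᵥ w) :=
    fun t ht => by
      simpa [B, add_mulVec] using IsMinimalSolution.exists_pos_apply_add_apply_le_smul_mulVec
        ⟨hxs_nonneg, hxs_sol, hxs_min⟩ hxs_pos hMinv hdet ha hb ht
  refine ⟨(le_iff_forall_one_lt_le_mul₀ zero_le_one).2 fun t ht => ?_, s, P + B,
    fun i j => add_nonneg (hP i j) (hB i j),
    (le_iff_forall_one_lt_le_mul₀ ((specRad_nonneg P).trans hsP)).2 fun t ht => ?_,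
    by rw [hMeq, sub_sub, sub_sub]⟩
  · obtain ⟨w, hw, hBw⟩ := hsub t ht
    rw [one_mul]
    exact specRad_le_of_mulVec_le_smul (mul_apply_nonneg hMinv hB) hw (by linarith)
      (inv_mul_mulVec_le_smul hMinv hdet hBw)
  · obtain ⟨w, hw, hBw⟩ := hsub t ht
    exact specRad_le_of_mulVec_le_smul (fun i j => add_nonneg (hP i j) (hB i j)) hw
      (mul_nonneg ((specRad_nonneg P).trans hsP) (by linarith))
      (add_mulVec_le_mul_smul hP (fun i => (hw i).le) ht.le (hMeq ▸ hBw))
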